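/- Let g : ℝ^N → ℝ ∪ {+∞} be proper lower semicontinuous convex, y, z ∈ ℝ^N fixed. Define for α > 0 the quantity q_g(α) = ‖prox_{αg}(y - αz) - y‖, where prox_{αg}(w) = argmin_x (‖x - w‖²/2 + α g(x)). Then q_g is a non-decreasing function of α on (0, ∞). -/

import Mathlib

/-! Up to a constant, `x ↦ ‖x - (y - α z)‖² / 2 + α g x` equals `F + α H` with
`F x = ‖x - y‖² / 2` and `H x = ⟪x - y, z⟫ + g x`. Comparing the minimizers for `α₁ < α₂`, each
against the other, and adding `α₂` times the first inequality to `α₁` times the second cancels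
`H` and leaves `F (P α₁) ≤ F (P α₂)`. -/

open RealInnerProductSpace

variable {N : ℕ}

/-- `p` is the proximal point of `g` with parameter `α > 0` at `w`, i.e. a minimizer of
`x ↦ ‖x - w‖²/2 + α g x`. -/
def IsProxPt (g : EuclideanSpace ℝ (Fin N) → EReal) (α : ℝ)
    (w p : EuclideanSpace ℝ (Fin N)) : Prop :=
  ∀ x, ((‖p - w‖ ^ 2 / 2 : ℝ) : EReal) + (α : EReal) * g p
      ≤ ((‖x - w‖ ^ 2 / 2 : ℝ) : EReal) + (α : EReal) * g x

theorem le_of_le_add_mul_of_le_add_mul {a b f₁ f₂ h₁ h₂ : ℝ} (ha : 0 ≤ a) (hab : a < b)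
    (hopt₁ : f₁ + a * h₁ ≤ f₂ + a * h₂) (hopt₂ : f₂ + b * h₂ ≤ f₁ + b * h₁) : f₁ ≤ f₂ := by
  have hb : 0 ≤ b := ha.trans hab.le
  have key : (b - a) * f₁ ≤ (b - a) * f₂ := by
    nlinarith [mul_le_mul_of_nonneg_left hopt₁ hb, mul_le_mul_of_nonneg_left hopt₂ ha]
  exact le_of_mul_le_mul_left key (sub_pos.mpr hab)

theorem norm_sub_sub_smul_sq {E : Type*} [NormedAddCommGroup E] [InnerProductSpace ℝ E]
    (x y z : E) (α : ℝ) :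
    ‖x - (y - α • z)‖ ^ 2 / 2 = ‖x - y‖ ^ 2 / 2 + α * ⟪x - y, z⟫ + α ^ 2 * ‖z‖ ^ 2 / 2 := by
  rw [show x - (y - α • z) = (x - y) + α • z by abel, norm_add_sq_real, real_inner_smul_right,
    norm_smul, mul_pow, Real.norm_eq_abs, sq_abs]
  ring

namespace IsProxPt

variable {g : EuclideanSpace ℝ (Fin N) → EReal} {α : ℝ}
  {w p x : EuclideanSpace ℝ (Fin N)}

theorem ne_top (hp : IsProxPt g α w p) (hα : 0 < α) (hx_top : g x ≠ ⊤) (hx_bot : g x ≠ ⊥) :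
    g p ≠ ⊤ := by
  intro hp_top
  have h := hp x
  rw [hp_top, EReal.mul_top_of_pos (by exact_mod_cast hα),
    EReal.add_top_of_ne_bot (EReal.coe_ne_bot _), top_le_iff,
    ← EReal.coe_toReal hx_top hx_bot, ← EReal.coe_mul, ← EReal.coe_add] at h
  exact EReal.coe_ne_top _ h

theorem toReal_le (hp : IsProxPt g α w p) (hp_top : g p ≠ ⊤) (hp_bot : g p ≠ ⊥)
    (hx_top : g x ≠ ⊤) (hx_bot : g x ≠ ⊥) :
    ‖p - w‖ ^ 2 / 2 + α * (g p).toReal ≤ ‖x - w‖ ^ 2 / 2 + α * (g x).toReal := by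
  have h := hp x
  rwa [← EReal.coe_toReal hp_top hp_bot, ← EReal.coe_toReal hx_top hx_bot, ← EReal.coe_mul,
    ← EReal.coe_add, ← EReal.coe_mul, ← EReal.coe_add, EReal.coe_le_coe_iff] at h

theorem tilted_le {y z : EuclideanSpace ℝ (Fin N)} (hp : IsProxPt g α (y - α • z) p)
    (hp_top : g p ≠ ⊤) (hp_bot : g p ≠ ⊥) (hx_top : g x ≠ ⊤) (hx_bot : g x ≠ ⊥) :
    ‖p - y‖ ^ 2 / 2 + α * (⟪p - y, z⟫ + (g p).toReal)
      ≤ ‖x - y‖ ^ 2 / 2 + α * (⟪x - y, z⟫ + (g x).toReal) := by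
  have h := hp.toReal_le hp_top hp_bot hx_top hx_bot
  rw [norm_sub_sub_smul_sq, norm_sub_sub_smul_sq] at h
  linarith

end IsProxPt

theorem prox_residual_monotone_general
    (g : EuclideanSpace ℝ (Fin N) → EReal)
    (hproper : ∃ z, g z ≠ ⊤) (hnobot : ∀ z, g z ≠ ⊥)
    (y z : EuclideanSpace ℝ (Fin N))
    (P : ℝ → EuclideanSpace ℝ (Fin N))
    (hP : ∀ α, 0 < α → IsProxPt g α (y - α • z) (P α))
    (α₁ α₂ : ℝ) (h₁ : 0 < α₁) (h₁₂ : α₁ ≤ α₂) :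
    ‖P α₁ - y‖ ≤ ‖P α₂ - y‖ := by
  rcases h₁₂.eq_or_lt with rfl | hlt
  · rfl
  obtain ⟨x₀, hx₀⟩ := hproper
  have h₂ : 0 < α₂ := h₁.trans hlt
  have hfin : ∀ α, 0 < α → g (P α) ≠ ⊤ := fun α hα => (hP α hα).ne_top hα hx₀ (hnobot x₀)
  have hsq : ‖P α₁ - y‖ ^ 2 / 2 ≤ ‖P α₂ - y‖ ^ 2 / 2 :=
    le_of_le_add_mul_of_le_add_mul h₁.le hlt
      ((hP α₁ h₁).tilted_le (hfin α₁ h₁) (hnobot _) (hfin α₂ h₂) (hnobot _))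
      ((hP α₂ h₂).tilted_le (hfin α₂ h₂) (hnobot _) (hfin α₁ h₁) (hnobot _))
  exact (pow_le_pow_iff_left₀ (norm_nonneg _) (norm_nonneg _) two_ne_zero).mp
    (by linarith)

/-- **Proximal monotonicity (increasing part).** For proper lsc convex `g` and fixed `y, z`,
the map `α ↦ ‖prox_{αg}(y - αz) - y‖` is non-decreasing on `(0, ∞)`. -/
theorem prox_residual_monotone
    (g : EuclideanSpace ℝ (Fin N) → EReal)
    (hproper : ∃ z, g z ≠ ⊤) (hnobot : ∀ z, g z ≠ ⊥)
    (hlsc : LowerSemicontinuous g)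
    (hconv : ∀ (x y : EuclideanSpace ℝ (Fin N)) (a b : ℝ), 0 ≤ a → 0 ≤ b → a + b = 1 →
      g (a • x + b • y) ≤ (a : EReal) * g x + (b : EReal) * g y)
    (y z : EuclideanSpace ℝ (Fin N))
    (P : ℝ → EuclideanSpace ℝ (Fin N))
    (hP : ∀ α, 0 < α → IsProxPt g α (y - α • z) (P α))
    (α₁ α₂ : ℝ) (h₁ : 0 < α₁) (h₁₂ : α₁ ≤ α₂) :
    ‖P α₁ - y‖ ≤ ‖P α₂ - y‖ :=
  prox_residual_monotone_general g hproper hnobot y z P hP α₁ α₂ h₁ h₁₂
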